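/- arXiv:1501.01835 — 11 statements merged into one kernel-verified Lean document; each statement's English description precedes it below -/
import Mathlib

section
/- For any subset A of a semigroup S, the separator Sep(A) is either empty or a subsemigroup of S (i.e., closed under multiplication). -/
/-- The separator of a subset `A` of a semigroup `S`. -/
def Separator {S : Type*} [Semigroup S] (A : Set S) : Set S :=
  {x | (∀ a ∈ A, x * a ∈ A) ∧ (∀ a ∈ A, a * x ∈ A) ∧
       (∀ a ∉ A, x * a ∉ A) ∧ (∀ a ∉ A, a * x ∉ A)}

theorem sep_empty_or_subsemigroup {S : Type*} [Semigroup S] (A : Set S) :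
    Separator A = ∅ ∨ ∀ x ∈ Separator A, ∀ y ∈ Separator A, x * y ∈ Separator A := by
  right
  rintro x ⟨hx1, hx2, hx3, hx4⟩ y ⟨hy1, hy2, hy3, hy4⟩
  refine ⟨fun a ha => ?_, fun a ha => ?_, fun a ha => ?_, fun a ha => ?_⟩
  · rw [mul_assoc]; exact hx1 _ (hy1 a ha)
  · rw [← mul_assoc]; exact hy2 _ (hx2 a ha)
  · rw [mul_assoc]; exact hx3 _ (hy3 a ha)
  · rw [← mul_assoc]; exact hy4 _ (hx4 a ha)
end

section
/- If A is a subset of a semigroup S such that Sep(A) is nonempty, then either Sep(A) ⊆ A or Sep(A) ⊆ S \ A. -/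
theorem sep_subset_or_subset_compl {S : Type*} [Semigroup S] (A : Set S)
    (h : (Separator A).Nonempty) : Separator A ⊆ A ∨ Separator A ⊆ Aᶜ := by
  by_contra hc
  push_neg at hc
  obtain ⟨h1, h2⟩ := hc
  obtain ⟨y, hy, hyA⟩ := Set.not_subset.mp h1
  obtain ⟨x, hx, hxA⟩ := Set.not_subset.mp h2
  simp only [Set.mem_compl_iff, not_not] at hxA
  exact hx.2.2.2 y hyA (hy.1 x hxA)
end

section
/- Let {A_i, i ∈ I} be a family of medial subsets of a semigroup S such that A = ⋂_{i∈I} Sep(A_i) is nonempty. Then any two elements a, b ∈ A are related under the congruence P defined by (a,b) ∈ P iff ∀ i ∈ I, ∀ x,y ∈ S: xay ∈ A_i ⟺ xby ∈ A_i. -/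
/-- `A` is a medial subset of a semigroup `S`. -/
def Medial {S : Type*} [Semigroup S] (A : Set S) : Prop :=
  ∀ a b x y : S, x * a * b * y ∈ A ↔ x * b * a * y ∈ A

/-- The relation `P_{A_i, i ∈ I}` associated with a family of subsets of a semigroup. -/
def PRel {S : Type*} [Semigroup S] {I : Type*} (A : I → Set S) (a b : S) : Prop :=
  ∀ (i : I) (x y : S), x * a * y ∈ A i ↔ x * b * y ∈ A i

lemma mul_sep_right_iff {S : Type*} [Semigroup S] {A : Set S} {c : S}
    (hc : c ∈ Separator A) (s : S) : s * c ∈ A ↔ s ∈ A :=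
  ⟨fun h => by_contra fun hs => hc.2.2.2 s hs h, hc.2.1 s⟩

lemma strip_sep {S : Type*} [Semigroup S] {A : Set S} (hA : Medial A) {a b : S}
    (ha : a ∈ Separator A) (hb : b ∈ Separator A) (x y : S) :
    x * a * y ∈ A ↔ x * y ∈ A := by
  rw [← mul_sep_right_iff hb (x * a * y), hA a y x b,
    mul_sep_right_iff hb (x * y * a), mul_sep_right_iff ha (x * y)]

theorem PRel_of_mem_inter_sep {S : Type*} [Semigroup S] {I : Type*} (A : I → Set S)
    (hmed : ∀ i, Medial (A i)) (hne : (⋂ i, Separator (A i)).Nonempty) :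
    ∀ a b : S, a ∈ ⋂ i, Separator (A i) → b ∈ ⋂ i, Separator (A i) → PRel A a b := by
  intro a b ha hb i x y
  have hai := Set.mem_iInter.mp ha i
  have hbi := Set.mem_iInter.mp hb i
  rw [strip_sep (hmed i) hai hbi, strip_sep (hmed i) hbi hai]
end

section
/- Let {A_i, i ∈ I} be a family of medial subsets of a semigroup S such that A = ⋂_{i∈I} Sep(A_i) is nonempty. If a ∈ A and b ∉ A, then (a,b) is not in the congruence P defined by (a,b) ∈ P iff ∀ i ∈ I, ∀ x,y ∈ S: xay ∈ A_i ⟺ xby ∈ A_i. In other words, A is a full P-class. -/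
theorem inter_sep_is_full_class {S : Type*} [Semigroup S] {I : Type*} (A : I → Set S)
    (hmed : ∀ i, Medial (A i)) (hne : (⋂ i, Separator (A i)).Nonempty) :
    ∀ a b : S, a ∈ ⋂ i, Separator (A i) → b ∉ ⋂ i, Separator (A i) → ¬ PRel A a b := by
  intro a b ha hb hP
  obtain ⟨s, hs⟩ := hne
  simp only [Set.mem_iInter] at ha hs
  rw [Set.mem_iInter] at hb
  push_neg at hb
  obtain ⟨i, hbi⟩ := hb
  obtain ⟨ha1, ha2, ha3, ha4⟩ := ha i
  obtain ⟨hs1, hs2, hs3, hs4⟩ := hs i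
  simp only [Separator, Set.mem_setOf_eq, not_and_or] at hbi
  push_neg at hbi
  rcases hbi with ⟨c, hc, hbc⟩ | ⟨c, hc, hbc⟩ | ⟨c, hc, hbc⟩ | ⟨c, hc, hbc⟩
  · have h1 : s * a * c ∈ A i := by rw [mul_assoc]; exact hs1 _ (ha1 c hc)
    have h2 : s * b * c ∈ A i := (hP i s c).mp h1
    rw [mul_assoc] at h2
    exact hs3 _ hbc h2
  · have h1 : c * a * s ∈ A i := hs2 _ (ha2 c hc)
    have h2 : c * b * s ∈ A i := (hP i c s).mp h1
    exact hs4 _ hbc h2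
  · have h1 : s * b * c ∈ A i := by rw [mul_assoc]; exact hs1 _ hbc
    have h2 : s * a * c ∈ A i := (hP i s c).mpr h1
    rw [mul_assoc] at h2
    exact hs3 _ (ha3 c hc) h2
  · have h1 : c * b * s ∈ A i := hs2 _ hbc
    have h2 : c * a * s ∈ A i := (hP i c s).mpr h1
    exact hs4 _ (ha4 c hc) h2
end

section
/- Let {A_i, i ∈ I} be a family of medial subsets of a semigroup S such that A = ⋂_{i∈I} Sep(A_i) is nonempty. Then for every a ∈ A and s ∈ S, both (sa, s) and (as, s) belong to the congruence P defined by (a,b) ∈ P iff ∀ i ∈ I, ∀ x,y ∈ S: xay ∈ A_i ⟺ xby ∈ A_i. Hence the class of A acts as an identity element in the quotient S/P. -/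
lemma sep_l {S : Type*} [Semigroup S] {A : Set S} {a : S} (h : a ∈ Separator A) (z : S) :
    a * z ∈ A ↔ z ∈ A := by
  obtain ⟨h1, h2, h3, h4⟩ := h
  constructor
  · intro hz
    by_contra hz'
    exact h3 _ hz' hz
  · exact h1 _

lemma sep_r {S : Type*} [Semigroup S] {A : Set S} {a : S} (h : a ∈ Separator A) (z : S) :
    z * a ∈ A ↔ z ∈ A := by
  obtain ⟨h1, h2, h3, h4⟩ := h
  constructor
  · intro hz
    by_contra hz'
    exact h4 _ hz' hz
  · exact h2 _

theorem inter_sep_is_identity {S : Type*} [Semigroup S] {I : Type*} (A : I → Set S)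
    (hmed : ∀ i, Medial (A i)) (hne : (⋂ i, Separator (A i)).Nonempty) :
    ∀ a ∈ ⋂ i, Separator (A i), ∀ s : S, PRel A (s * a) s ∧ PRel A (a * s) s := by
  intro a ha s
  rw [Set.mem_iInter] at ha
  constructor
  · intro i x y
    have hai := ha i
    calc x * (s * a) * y ∈ A i
        ↔ a * (x * (s * a) * y) ∈ A i := (sep_l hai _).symm
      _ ↔ a * (x * s) * a * y ∈ A i := by
          rw [show a * (x * (s * a) * y) = a * (x * s) * a * y by simp [mul_assoc]]
      _ ↔ a * a * (x * s) * y ∈ A i := hmed i (x * s) a a y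
      _ ↔ a * (a * (x * s * y)) ∈ A i := by
          rw [show a * a * (x * s) * y = a * (a * (x * s * y)) by simp [mul_assoc]]
      _ ↔ a * (x * s * y) ∈ A i := sep_l hai _
      _ ↔ x * s * y ∈ A i := sep_l hai _
  · intro i x y
    have hai := ha i
    calc x * (a * s) * y ∈ A i
        ↔ x * (a * s) * y * a ∈ A i := (sep_r hai _).symm
      _ ↔ x * a * (s * y) * a ∈ A i := by
          rw [show x * (a * s) * y * a = x * a * (s * y) * a by simp [mul_assoc]]
      _ ↔ x * (s * y) * a * a ∈ A i := hmed i a (s * y) x a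
      _ ↔ x * s * y * a ∈ A i := by
          rw [show x * (s * y) * a * a = x * s * y * a * a by simp [mul_assoc]]
          exact sep_r hai _
      _ ↔ x * s * y ∈ A i := sep_r hai _
end

section
/- Let σ be a congruence on a semigroup S such that S/σ is a commutative monoid, let A be the σ-class which is the identity of S/σ, and let {A_i, i ∈ I} be the family of all σ-classes. Then A = ⋂_{i∈I} Sep(A_i), each A_i is a medial subset of S, and σ equals the congruence P defined by (a,b) ∈ P iff ∀ i ∈ I, ∀ x,y ∈ S: xay ∈ A_i ⟺ xby ∈ A_i. -/
/-- Every commutative monoid congruence `σ` arises as `P` applied to its family of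
classes, whose intersection of separators is the identity class. Here the classes are
indexed by the elements of `S` themselves: the class of `i` is `{x | σ x i}`. -/
theorem commutative_monoid_congruence_is_PRel {S : Type*} [Semigroup S]
    (σ : Con S) (e : S)
    (hid : ∀ s : S, σ (e * s) s ∧ σ (s * e) s)
    (hcomm : ∀ a b : S, σ (a * b) (b * a)) :
    ({x | σ x e} = ⋂ i : S, Separator {x | σ x i}) ∧
    (∀ i : S, Medial {x | σ x i}) ∧
    (∀ a b : S, σ a b ↔ PRel (fun i : S => {x | σ x i}) a b) := by
  constructor
  · ext x
    simp only [Set.mem_iInter, Set.mem_setOf_eq, Separator]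
    constructor
    · intro hx i
      refine ⟨fun a ha => ?_, fun a ha => ?_, fun a ha h => ha ?_, fun a ha h => ha ?_⟩
      · exact σ.trans (σ.trans (σ.mul hx (σ.refl a)) (hid a).1) ha
      · exact σ.trans (σ.trans (σ.mul (σ.refl a) hx) (hid a).2) ha
      · exact σ.trans (σ.symm (σ.trans (σ.mul hx (σ.refl a)) (hid a).1)) h
      · exact σ.trans (σ.symm (σ.trans (σ.mul (σ.refl a) hx) (hid a).2)) h
    · intro hx
      have h := (hx e).1 e (σ.refl e)
      exact σ.trans (σ.symm (hid x).2) h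
  constructor
  · intro i a b x y
    have h : σ (x * a * b * y) (x * b * a * y) := by
      have := σ.mul (σ.mul (σ.refl x) (hcomm a b)) (σ.refl y)
      simpa [mul_assoc] using this
    exact ⟨fun hm => σ.trans (σ.symm h) hm, fun hm => σ.trans h hm⟩
  · intro a b
    constructor
    · intro hab i x y
      have h := σ.mul (σ.mul (σ.refl x) hab) (σ.refl y)
      exact ⟨fun hm => σ.trans (σ.symm h) hm, fun hm => σ.trans h hm⟩
    · intro hP
      have h1 : σ (e * b * e) (e * a * e) := (hP (e * a * e) e e).1 (σ.refl _)
      have ha : σ (e * a * e) a := σ.trans (σ.mul (hid a).1 (σ.refl e)) (hid a).2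
      have hb : σ (e * b * e) b := σ.trans (σ.mul (hid b).1 (σ.refl e)) (hid b).2
      exact σ.trans (σ.symm ha) (σ.trans (σ.symm h1) hb)
end

section
/- For any medial subset A of a semigroup S, if Sep(A) is nonempty then Sep(A) is a reflexive unitary subsemigroup of S. -/
lemma mem_sep_iff {S : Type*} [Semigroup S] (A : Set S) (x : S) :
    x ∈ Separator A ↔ ∀ t : S, (x * t ∈ A ↔ t ∈ A) ∧ (t * x ∈ A ↔ t ∈ A) := by
  constructor
  · rintro ⟨h1, h2, h3, h4⟩ t
    by_cases ht : t ∈ A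
    · exact ⟨⟨fun _ => ht, fun _ => h1 t ht⟩, ⟨fun _ => ht, fun _ => h2 t ht⟩⟩
    · exact ⟨⟨fun h => absurd h (h3 t ht), fun h => absurd h ht⟩,
        ⟨fun h => absurd h (h4 t ht), fun h => absurd h ht⟩⟩
  · intro h
    exact ⟨fun a ha => (h a).1.mpr ha, fun a ha => (h a).2.mpr ha,
      fun a ha h' => ha ((h a).1.mp h'), fun a ha h' => ha ((h a).2.mp h')⟩

theorem sep_of_medial_reflexive_unitary_subsemigroup {S : Type*} [Semigroup S]
    (A : Set S) (hmed : Medial A) (hne : (Separator A).Nonempty) :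
    (∀ a ∈ Separator A, ∀ b ∈ Separator A, a * b ∈ Separator A) ∧
    (∀ a b : S, a * b ∈ Separator A → b * a ∈ Separator A) ∧
    (∀ a b : S, a ∈ Separator A → a * b ∈ Separator A → b ∈ Separator A) ∧
    (∀ a b : S, a ∈ Separator A → b * a ∈ Separator A → b ∈ Separator A) := by
  obtain ⟨s, hs⟩ := hne
  rw [mem_sep_iff] at hs
  refine ⟨?_, ?_, ?_, ?_⟩
  · intro a ha b hb
    rw [mem_sep_iff] at ha hb ⊢
    intro t
    constructor
    · rw [mul_assoc, (ha _).1, (hb _).1]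
    · rw [← mul_assoc, (hb _).2, (ha _).2]
  · intro a b hab
    rw [mem_sep_iff] at hab ⊢
    intro t
    constructor
    · calc b * a * t ∈ A ↔ s * (b * a * t) ∈ A := ((hs _).1).symm
        _ ↔ s * (b * a * t) * s ∈ A := ((hs _).2).symm
        _ ↔ s * b * a * (t * s) ∈ A := by simp only [mul_assoc]
        _ ↔ s * a * b * (t * s) ∈ A := hmed b a s (t * s)
        _ ↔ s * (a * b * t * s) ∈ A := by simp only [mul_assoc]
        _ ↔ a * b * t * s ∈ A := (hs _).1
        _ ↔ a * b * t ∈ A := (hs _).2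
        _ ↔ t ∈ A := (hab _).1
    · calc t * (b * a) ∈ A ↔ s * (t * (b * a)) ∈ A := ((hs _).1).symm
        _ ↔ s * (t * (b * a)) * s ∈ A := ((hs _).2).symm
        _ ↔ s * t * b * a * s ∈ A := by simp only [mul_assoc]
        _ ↔ s * t * a * b * s ∈ A := hmed b a (s * t) s
        _ ↔ s * (t * (a * b)) * s ∈ A := by simp only [mul_assoc]
        _ ↔ s * (t * (a * b)) ∈ A := (hs _).2
        _ ↔ t * (a * b) ∈ A := (hs _).1
        _ ↔ t ∈ A := (hab _).2
  · intro a b ha hab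
    rw [mem_sep_iff] at ha hab ⊢
    intro t
    constructor
    · calc b * t ∈ A ↔ a * (b * t) ∈ A := ((ha _).1).symm
        _ ↔ a * b * t ∈ A := by simp only [mul_assoc]
        _ ↔ t ∈ A := (hab _).1
    · calc t * b ∈ A ↔ t * b * a ∈ A := ((ha _).2).symm
        _ ↔ t * b * a * s ∈ A := ((hs _).2).symm
        _ ↔ t * a * b * s ∈ A := hmed b a t s
        _ ↔ t * a * b ∈ A := (hs _).2
        _ ↔ t * (a * b) ∈ A := by simp only [mul_assoc]
        _ ↔ t ∈ A := (hab _).2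
  · intro a b ha hba
    rw [mem_sep_iff] at ha hba ⊢
    intro t
    constructor
    · calc b * t ∈ A ↔ a * (b * t) ∈ A := ((ha _).1).symm
        _ ↔ s * (a * (b * t)) ∈ A := ((hs _).1).symm
        _ ↔ s * a * b * t ∈ A := by simp only [mul_assoc]
        _ ↔ s * b * a * t ∈ A := hmed a b s t
        _ ↔ s * (b * a * t) ∈ A := by simp only [mul_assoc]
        _ ↔ b * a * t ∈ A := (hs _).1
        _ ↔ t ∈ A := (hba _).1
    · calc t * b ∈ A ↔ t * b * a ∈ A := ((ha _).2).symm
        _ ↔ t * (b * a) ∈ A := by simp only [mul_assoc]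
        _ ↔ t ∈ A := (hba _).2
end

section
/- For any medial subset A of a semigroup S with Sep(A) nonempty, Sep(Sep(A)) = Sep(A). -/
theorem sep_sep_eq_sep {S : Type*} [Semigroup S]
    (A : Set S) (hmed : Medial A) (hne : (Separator A).Nonempty) :
    Separator (Separator A) = Separator A := by
  obtain ⟨p, hpmem⟩ := hne
  have mem_iff : ∀ x : S,
      x ∈ Separator A ↔ ((∀ s, x*s∈A ↔ s∈A) ∧ (∀ s, s*x∈A ↔ s∈A)) := by
    intro x
    constructor
    · rintro ⟨h1, h2, h3, h4⟩
      refine ⟨fun s => ⟨?_, h1 s⟩, fun s => ⟨?_, h2 s⟩⟩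
      · intro hxs; by_contra hs; exact h3 s hs hxs
      · intro hsx; by_contra hs; exact h4 s hs hsx
    · rintro ⟨h1, h2⟩
      exact ⟨fun a ha => (h1 a).2 ha, fun a ha => (h2 a).2 ha,
             fun a ha h => ha ((h1 a).1 h), fun a ha h => ha ((h2 a).1 h)⟩
  have hp := (mem_iff p).1 hpmem
  have comm : ∀ s t : S, s*t∈A ↔ t*s∈A := by
    intro s t
    calc s*t∈A ↔ (s*t)*p∈A := (hp.2 _).symm
      _ ↔ p*((s*t)*p)∈A := (hp.1 _).symm
      _ ↔ p*s*t*p∈A := by rw [← mul_assoc, ← mul_assoc]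
      _ ↔ p*t*s*p∈A := hmed s t p p
      _ ↔ p*((t*s)*p)∈A := by rw [← mul_assoc, ← mul_assoc]
      _ ↔ (t*s)*p∈A := hp.1 _
      _ ↔ t*s∈A := hp.2 _
  have cancelL : ∀ q y : S, q ∈ Separator A → q*y ∈ Separator A → y ∈ Separator A := by
    intro q y hq hqy
    rw [mem_iff] at hq hqy ⊢
    have left : ∀ s, y*s∈A ↔ s∈A := fun s => by
      rw [← hq.1 (y*s), ← mul_assoc]; exact hqy.1 s
    exact ⟨left, fun s => (comm s y).trans (left s)⟩
  have cancelR : ∀ q y : S, q ∈ Separator A → y*q ∈ Separator A → y ∈ Separator A := by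
    intro q y hq hyq
    rw [mem_iff] at hq hyq ⊢
    have right : ∀ s, s*y∈A ↔ s∈A := fun s => by
      rw [← hq.2 (s*y), mul_assoc]; exact hyq.2 s
    exact ⟨fun s => (comm y s).trans (right s), right⟩
  have mul_mem : ∀ x y : S, x ∈ Separator A → y ∈ Separator A → x*y ∈ Separator A := by
    intro x y hx hy
    rw [mem_iff] at hx hy ⊢
    constructor
    · intro s; rw [mul_assoc]; exact (hx.1 _).trans (hy.1 s)
    · intro s; rw [← mul_assoc]; exact (hy.2 _).trans (hx.2 s)
  ext x
  constructor
  · rintro ⟨_, h2, _, _⟩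
    exact cancelL p x hpmem (h2 p hpmem)
  · intro hx
    refine ⟨fun a ha => mul_mem x a hx ha, fun a ha => mul_mem a x ha hx, ?_, ?_⟩
    · intro a ha h; exact ha (cancelL x a hx h)
    · intro a ha h; exact ha (cancelR x a hx h)
end

section
/- Let S be a permutative semigroup. Then there exists a positive integer k such that for every u, v ∈ S^k (products of k elements of S) and every x, y ∈ S, we have uxyv = uyxv. -/
/-- The product `a * l₁ * l₂ * ⋯ * lₘ` of an element and a list in a semigroup. -/
def pProd {S : Type*} [Semigroup S] (a : S) (l : List S) : S :=
  l.foldl (· * ·) a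

/-- `S` satisfies the nontrivial permutation identity given by `σ` (on `n ≥ 2` letters). -/
def PermIdentity {S : Type*} [Semigroup S] (n : ℕ) (hn : 2 ≤ n)
    (σ : Equiv.Perm (Fin n)) : Prop :=
  ∀ x : Fin n → S,
    pProd (x ⟨0, by omega⟩) (List.ofFn x).tail
      = pProd (x (σ ⟨0, by omega⟩)) (List.ofFn (x ∘ σ)).tail

section Helpers

set_option linter.unusedSectionVars false

variable {S : Type*} [Semigroup S]

def q (x : S) : WithOne S := x
lemma q_mul (x y : S) : q (x * y) = q x * q y := WithOne.coe_mul x y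
lemma q_inj {x y : S} (h : q x = q y) : x = y := WithOne.coe_inj.mp h
def P (l : List S) : WithOne S := (l.map q).prod
@[simp] lemma P_nil : P ([] : List S) = 1 := rfl
@[simp] lemma P_cons (x : S) (l : List S) : P (x :: l) = q x * P l := by simp [P]
@[simp] lemma P_append (l₁ l₂ : List S) : P (l₁ ++ l₂) = P l₁ * P l₂ := by simp [P]
lemma q_pProd (x : S) (l : List S) : q (pProd x l) = P (x :: l) := by
  induction l generalizing x with
  | nil => simp [pProd, P]
  | cons b t ih =>
      have h : pProd x (b :: t) = pProd (x * b) t := rfl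
      rw [h, ih]; simp [q_mul, mul_assoc]

lemma take_succ' {α : Type*} (l : List α) (t : ℕ) (h : t < l.length) :
    l.take (t + 1) = l.take t ++ [l[t]] := by
  rw [List.take_succ, List.getElem?_eq_getElem h]
  rfl

lemma take_ofFn_eq {n : ℕ} (g h : Fin n → S) (t : ℕ)
    (hgh : ∀ i : Fin n, (i : ℕ) < t → g i = h i) :
    (List.ofFn g).take t = (List.ofFn h).take t := by
  apply List.ext_getElem (by simp)
  intro i h1 h2
  have hi : i < t := by simp at h1; omega
  simp only [List.getElem_take, List.getElem_ofFn]
  exact hgh _ hi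

lemma drop_ofFn_eq {n : ℕ} (g h : Fin n → S) (t : ℕ)
    (hgh : ∀ i : Fin n, t ≤ (i : ℕ) → g i = h i) :
    (List.ofFn g).drop t = (List.ofFn h).drop t := by
  apply List.ext_getElem (by simp)
  intro i h1 h2
  simp only [List.getElem_drop, List.getElem_ofFn]
  exact hgh _ (by simp)

lemma P_ofFn_split {n : ℕ} (g : Fin n → S) (t : ℕ) (ht : t < n) :
    P (List.ofFn g) =
      P ((List.ofFn g).take t) * q (g ⟨t, ht⟩) * P ((List.ofFn g).drop (t + 1)) := by
  conv_lhs => rw [← List.take_append_drop t (List.ofFn g)]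
  rw [List.drop_eq_getElem_cons (show t < (List.ofFn g).length by simpa using ht)]
  rw [List.getElem_ofFn]
  rw [P_append, P_cons, mul_assoc]

lemma upd_split {n : ℕ} (a : Fin n → S) (t : Fin n) (v : S) :
    P (List.ofFn (Function.update a t v)) =
      P ((List.ofFn a).take (t : ℕ)) * q v * P ((List.ofFn a).drop ((t : ℕ) + 1)) := by
  rw [P_ofFn_split (Function.update a t v) (t : ℕ) t.isLt]
  have h1 : (List.ofFn (Function.update a t v)).take (t : ℕ) = (List.ofFn a).take (t : ℕ) :=
    take_ofFn_eq _ _ _ (fun i hi =>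
      Function.update_of_ne (Fin.ne_of_val_ne (by omega)) _ _)
  have h2 : (List.ofFn (Function.update a t v)).drop ((t : ℕ) + 1) =
      (List.ofFn a).drop ((t : ℕ) + 1) :=
    drop_ofFn_eq _ _ _ (fun i hi =>
      Function.update_of_ne (Fin.ne_of_val_ne (by omega)) _ _)
  have h3 : Function.update a t v ⟨(t : ℕ), t.isLt⟩ = v := by
    simp
  rw [h1, h2, h3]

lemma update_comp_symm {n : ℕ} (σ : Equiv.Perm (Fin n)) (a : Fin n → S) (t : Fin n) (v : S) :
    (Function.update a t v) ∘ ⇑σ.symm = Function.update (a ∘ ⇑σ.symm) (σ t) v := by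
  funext j
  simp only [Function.comp_apply]
  by_cases h : j = σ t
  · subst h
    rw [Equiv.symm_apply_apply]
    simp
  · rw [Function.update_of_ne (show σ.symm j ≠ t from fun hc => h (by rw [← hc]; simp)),
        Function.update_of_ne h]
    rfl

lemma update_comp {n : ℕ} (σ : Equiv.Perm (Fin n)) (a : Fin n → S) (t : Fin n) (v : S) :
    (Function.update a t v) ∘ ⇑σ = Function.update (a ∘ ⇑σ) (σ.symm t) v := by
  simpa using update_comp_symm σ.symm a t v

/-- moving `f` across the boundary between two adjacent positions. -/
lemma reglue {n : ℕ} (c : Fin n → S) (t : ℕ) (h1 : t + 1 < n) (f : S) :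
    P (List.ofFn (Function.update c ⟨t, by omega⟩ (c ⟨t, by omega⟩ * f)))
      = P (List.ofFn (Function.update c ⟨t + 1, h1⟩ (f * c ⟨t + 1, h1⟩))) := by
  rw [upd_split, upd_split]
  have e1 : (List.ofFn c).take (t + 1) = (List.ofFn c).take t ++ [c ⟨t, by omega⟩] := by
    rw [take_succ' (List.ofFn c) t (by simpa using by omega), List.getElem_ofFn]
  have e2 : (List.ofFn c).drop (t + 1) =
      c ⟨t + 1, h1⟩ :: (List.ofFn c).drop (t + 2) := by
    rw [List.drop_eq_getElem_cons (show t + 1 < (List.ofFn c).length by simpa using h1),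
      List.getElem_ofFn]
  simp only [Fin.val_mk] at *
  rw [e1, e2]
  simp [q_mul, mul_assoc]

section Jump

variable {n : ℕ} (σ : Equiv.Perm (Fin n))
variable (hB : ∀ x : Fin n → S, P (List.ofFn x) = P (List.ofFn (x ∘ ⇑σ)))

include hB

/-- an element can jump left from just after position `s` to just before position `w`. -/
lemma jump_left (sF : Fin n) (hs : σ sF ≠ sF) (hsmax : ∀ i : Fin n, σ i ≠ i → i ≤ sF) :
    ∃ wF : Fin n, wF < sF ∧ ∀ (a : Fin n → S) (f : S),
      P (List.ofFn (Function.update a sF (a sF * f)))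
        = P (List.ofFn (Function.update a wF (f * a wF))) := by
  have hslt : (σ sF : ℕ) < (sF : ℕ) := by
    rcases lt_trichotomy ((σ sF : ℕ)) ((sF : ℕ)) with h | h | h
    · exact h
    · exact absurd (Fin.ext h) hs
    · exfalso
      have hfix : σ (σ sF) = σ sF := by
        by_contra hne
        exact absurd (hsmax _ hne) (not_le.mpr (Fin.lt_def.mpr h))
      exact hs (σ.injective hfix)
  have hj1 : (σ sF : ℕ) + 1 < n := by have := sF.isLt; omega
  set tF : Fin n := ⟨(σ sF : ℕ) + 1, hj1⟩ with htF
  set wF : Fin n := σ.symm tF with hwF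
  have hwne : wF ≠ sF := by
    intro h
    have : σ sF = tF := by rw [← h, hwF]; simp
    have := congrArg Fin.val this
    simp [htF] at this
  have hwlt : wF < sF := by
    rcases lt_trichotomy wF sF with h | h | h
    · exact h
    · exact absurd h hwne
    · exfalso
      have hfix : σ wF = wF := by
        by_contra hne
        exact absurd (hsmax _ hne) (by exact not_le.mpr h)
      have h2 : σ wF = tF := by rw [hwF]; simp
      have : (wF : ℕ) = (σ sF : ℕ) + 1 := by
        have := congrArg Fin.val (hfix.symm.trans h2)
        simpa [htF] using this
      have := Fin.lt_def.mp h
      omega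
  refine ⟨wF, hwlt, fun a f => ?_⟩
  set c : Fin n → S := a ∘ ⇑σ.symm with hc
  have hcj : c (σ sF) = a sF := by rw [hc]; simp
  -- step 1 : apply the base identity backwards
  have step1 : P (List.ofFn (Function.update a sF (a sF * f)))
      = P (List.ofFn (Function.update c (σ sF) (c (σ sF) * f))) := by
    have h := hB ((Function.update a sF (a sF * f)) ∘ ⇑σ.symm)
    have hcomp : ((Function.update a sF (a sF * f)) ∘ ⇑σ.symm) ∘ ⇑σ
        = Function.update a sF (a sF * f) := by
      funext i
      rw [Function.comp_apply, Function.comp_apply, Equiv.symm_apply_apply]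
    rw [hcomp] at h
    rw [← h, update_comp_symm, hcj, ← hc]
  -- step 2 : reglue
  have step2 : P (List.ofFn (Function.update c (σ sF) (c (σ sF) * f)))
      = P (List.ofFn (Function.update c tF (f * c tF))) := by
    have := reglue c (σ sF : ℕ) hj1 f
    simpa [htF, Fin.eta] using this
  -- step 3 : apply the base identity forwards
  have step3 : P (List.ofFn (Function.update c tF (f * c tF)))
      = P (List.ofFn (Function.update a wF (f * a wF))) := by
    have h := hB (Function.update c tF (f * c tF))
    rw [update_comp] at h
    have hca : c ∘ ⇑σ = a := by funext i; rw [hc]; simp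
    have hct : c tF = a wF := by rw [hc, hwF]; rfl
    rw [hca, hct, ← hwF] at h
    exact h
  rw [step1, step2, step3]

/-- an element can jump right from just before position `r` to just after position `w'`. -/
lemma jump_right (rF : Fin n) (hr : σ rF ≠ rF) (hrmin : ∀ i : Fin n, σ i ≠ i → rF ≤ i) :
    ∃ wF : Fin n, rF < wF ∧ ∀ (a : Fin n → S) (f : S),
      P (List.ofFn (Function.update a rF (f * a rF)))
        = P (List.ofFn (Function.update a wF (a wF * f))) := by
  have hrlt : (rF : ℕ) < (σ rF : ℕ) := by
    rcases lt_trichotomy ((σ rF : ℕ)) ((rF : ℕ)) with h | h | h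
    · exfalso
      have hfix : σ (σ rF) = σ rF := by
        by_contra hne
        exact absurd (hrmin _ hne) (not_le.mpr (Fin.lt_def.mpr h))
      exact hr (σ.injective hfix)
    · exact absurd (Fin.ext h) hr
    · exact h
  have hm1 : (σ rF : ℕ) - 1 < n := by have := (σ rF).isLt; omega
  set mF : Fin n := ⟨(σ rF : ℕ) - 1, hm1⟩ with hmF
  set wF : Fin n := σ.symm mF with hwF
  have hwne : wF ≠ rF := by
    intro h
    have : σ rF = mF := by rw [← h, hwF]; simp
    have := congrArg Fin.val this
    simp [hmF] at this
    omega
  have hwgt : rF < wF := by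
    rcases lt_trichotomy rF wF with h | h | h
    · exact h
    · exact absurd h.symm hwne
    · exfalso
      have hfix : σ wF = wF := by
        by_contra hne
        exact absurd (hrmin _ hne) (by exact not_le.mpr h)
      have h2 : σ wF = mF := by rw [hwF]; simp
      have : (wF : ℕ) = (σ rF : ℕ) - 1 := by
        have := congrArg Fin.val (hfix.symm.trans h2)
        simpa [hmF] using this
      have := Fin.lt_def.mp h
      omega
  refine ⟨wF, hwgt, fun a f => ?_⟩
  set c : Fin n → S := a ∘ ⇑σ.symm with hc
  have hcj : c (σ rF) = a rF := by rw [hc]; simp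
  have step1 : P (List.ofFn (Function.update a rF (f * a rF)))
      = P (List.ofFn (Function.update c (σ rF) (f * c (σ rF)))) := by
    have h := hB ((Function.update a rF (f * a rF)) ∘ ⇑σ.symm)
    have hcomp : ((Function.update a rF (f * a rF)) ∘ ⇑σ.symm) ∘ ⇑σ
        = Function.update a rF (f * a rF) := by
      funext i
      rw [Function.comp_apply, Function.comp_apply, Equiv.symm_apply_apply]
    rw [hcomp] at h
    rw [← h, update_comp_symm, hcj, ← hc]
  have step2 : P (List.ofFn (Function.update c (σ rF) (f * c (σ rF))))
      = P (List.ofFn (Function.update c mF (c mF * f))) := by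
    have hj1 : ((σ rF : ℕ) - 1) + 1 < n := by have := (σ rF).isLt; omega
    have := (reglue c ((σ rF : ℕ) - 1) hj1 f).symm
    have he : (⟨(σ rF : ℕ) - 1 + 1, hj1⟩ : Fin n) = σ rF := by
      apply Fin.ext; simp; omega
    rw [he] at this
    simpa [hmF, Fin.eta] using this
  have step3 : P (List.ofFn (Function.update c mF (c mF * f)))
      = P (List.ofFn (Function.update a wF (a wF * f))) := by
    have h := hB (Function.update c mF (c mF * f))
    rw [update_comp] at h
    have hca : c ∘ ⇑σ = a := by funext i; rw [hc]; simp
    have hct : c mF = a wF := by rw [hc, hwF]; rfl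
    rw [hca, hct, ← hwF] at h
    exact h
  rw [step1, step2, step3]

end Jump
/-- list form of the left jump -/
lemma jump_left_list {n : ℕ} (sF wF : Fin n) (hws : wF < sF)
    (hj : ∀ (a : Fin n → S) (f : S),
      P (List.ofFn (Function.update a sF (a sF * f)))
        = P (List.ofFn (Function.update a wF (f * a wF)))) :
    ∀ (l₁ l₂ l₃ : List S) (f : S), l₁.length = (wF : ℕ) →
      l₂.length = (sF : ℕ) + 1 - (wF : ℕ) → l₃.length = n - 1 - (sF : ℕ) →
      P ((l₁ ++ l₂) ++ f :: l₃) = P (l₁ ++ f :: (l₂ ++ l₃)) := by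
  intro l₁ l₂ l₃ f h1 h2 h3
  have hwlt : (wF : ℕ) < (sF : ℕ) := hws
  have hsn : (sF : ℕ) < n := sF.isLt
  set L : List S := l₁ ++ (l₂ ++ l₃) with hLdef
  have hL : L.length = n := by simp [hLdef]; omega
  set a : Fin n → S := fun i => L[(i : ℕ)]'(by rw [hL]; exact i.isLt) with ha
  have hof : List.ofFn a = L := by
    apply List.ext_getElem (by simp [hL])
    intro i hh1 hh2
    simp [ha]
  have key := hj a f
  rw [upd_split, upd_split, hof] at key
  have hL2 : L = (l₁ ++ l₂) ++ l₃ := by simp [hLdef]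
  have t1 : L.take ((sF : ℕ) + 1) = l₁ ++ l₂ := by
    rw [hL2]; exact List.take_left' (by simp; omega)
  have d1 : L.drop ((sF : ℕ) + 1) = l₃ := by
    rw [hL2]; exact List.drop_left' (by simp; omega)
  have t2 : L.take (wF : ℕ) = l₁ := List.take_left' h1
  have d2 : L.drop (wF : ℕ) = l₂ ++ l₃ := List.drop_left' h1
  have hsL : (sF : ℕ) < L.length := by omega
  have hwL : (wF : ℕ) < L.length := by omega
  have t3 : L.take ((sF : ℕ) + 1) = L.take (sF : ℕ) ++ [L[(sF : ℕ)]'hsL] :=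
    take_succ' _ _ hsL
  have d3 : L.drop (wF : ℕ) = L[(wF : ℕ)]'hwL :: L.drop ((wF : ℕ) + 1) :=
    List.drop_eq_getElem_cons hwL
  have has : a sF = L[(sF : ℕ)]'hsL := rfl
  have haw : a wF = L[(wF : ℕ)]'hwL := rfl
  rw [has, haw] at key
  calc P ((l₁ ++ l₂) ++ f :: l₃)
      = P (L.take (sF : ℕ)) * q (L[(sF : ℕ)]'hsL * f) * P (L.drop ((sF : ℕ) + 1)) := by
        rw [← t1, ← d1, t3]
        simp only [P_append, P_cons, P_nil, q_mul, mul_assoc, mul_one, one_mul]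
    _ = P (L.take (wF : ℕ)) * q (f * L[(wF : ℕ)]'hwL) * P (L.drop ((wF : ℕ) + 1)) := key
    _ = P (l₁ ++ f :: (l₂ ++ l₃)) := by
        rw [t2, ← d2, d3]
        simp only [P_append, P_cons, P_nil, q_mul, mul_assoc, mul_one, one_mul]

/-- list form of the right jump -/
lemma jump_right_list {n : ℕ} (rF wF : Fin n) (hrw : rF < wF)
    (hj : ∀ (a : Fin n → S) (f : S),
      P (List.ofFn (Function.update a rF (f * a rF)))
        = P (List.ofFn (Function.update a wF (a wF * f)))) :
    ∀ (l₁ l₂ l₃ : List S) (f : S), l₁.length = (rF : ℕ) →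
      l₂.length = (wF : ℕ) + 1 - (rF : ℕ) → l₃.length = n - 1 - (wF : ℕ) →
      P (l₁ ++ f :: (l₂ ++ l₃)) = P ((l₁ ++ l₂) ++ f :: l₃) := by
  intro l₁ l₂ l₃ f h1 h2 h3
  have hwlt : (rF : ℕ) < (wF : ℕ) := hrw
  have hsn : (wF : ℕ) < n := wF.isLt
  set L : List S := l₁ ++ (l₂ ++ l₃) with hLdef
  have hL : L.length = n := by simp [hLdef]; omega
  set a : Fin n → S := fun i => L[(i : ℕ)]'(by rw [hL]; exact i.isLt) with ha
  have hof : List.ofFn a = L := by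
    apply List.ext_getElem (by simp [hL])
    intro i hh1 hh2
    simp [ha]
  have key := hj a f
  rw [upd_split, upd_split, hof] at key
  have hL2 : L = (l₁ ++ l₂) ++ l₃ := by simp [hLdef]
  have t1 : L.take ((wF : ℕ) + 1) = l₁ ++ l₂ := by
    rw [hL2]; exact List.take_left' (by simp; omega)
  have d1 : L.drop ((wF : ℕ) + 1) = l₃ := by
    rw [hL2]; exact List.drop_left' (by simp; omega)
  have t2 : L.take (rF : ℕ) = l₁ := List.take_left' h1
  have d2 : L.drop (rF : ℕ) = l₂ ++ l₃ := List.drop_left' h1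
  have hsL : (wF : ℕ) < L.length := by omega
  have hwL : (rF : ℕ) < L.length := by omega
  have t3 : L.take ((wF : ℕ) + 1) = L.take (wF : ℕ) ++ [L[(wF : ℕ)]'hsL] :=
    take_succ' _ _ hsL
  have d3 : L.drop (rF : ℕ) = L[(rF : ℕ)]'hwL :: L.drop ((rF : ℕ) + 1) :=
    List.drop_eq_getElem_cons hwL
  have has : a wF = L[(wF : ℕ)]'hsL := rfl
  have haw : a rF = L[(rF : ℕ)]'hwL := rfl
  rw [has, haw] at key
  calc P (l₁ ++ f :: (l₂ ++ l₃))
      = P (L.take (rF : ℕ)) * q (f * L[(rF : ℕ)]'hwL) * P (L.drop ((rF : ℕ) + 1)) := by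
        rw [← t2, ← d2, d3]
        simp only [P_append, P_cons, P_nil, q_mul, mul_assoc, mul_one, one_mul]
    _ = P (L.take (wF : ℕ)) * q (L[(wF : ℕ)]'hsL * f) * P (L.drop ((wF : ℕ) + 1)) := key
    _ = P ((l₁ ++ l₂) ++ f :: l₃) := by
        rw [← t1, ← d1, t3]
        simp only [P_append, P_cons, P_nil, q_mul, mul_assoc, mul_one, one_mul]

/-- lifting a fixed-length jump identity to blocks of flexible length -/
lemma lift_jump (p₁ p₂ p₃ : ℕ) (hp₂ : 1 ≤ p₂)
    (base : ∀ (l₁ l₂ l₃ : List S) (f : S), l₁.length = p₁ → l₂.length = p₂ →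
      l₃.length = p₃ → P ((l₁ ++ l₂) ++ f :: l₃) = P (l₁ ++ f :: (l₂ ++ l₃))) :
    ∀ (c b e : List S) (f : S), p₁ ≤ c.length → p₂ ≤ b.length → p₃ ≤ e.length →
      P ((c ++ b) ++ f :: e) = P (c ++ f :: (b ++ e)) := by
  intro c b e f hc hb he
  obtain ⟨c₀, c₁, rfl, hc₁⟩ : ∃ c₀ c₁, c = c₀ ++ c₁ ∧ c₁.length = p₁ :=
    ⟨c.take (c.length - p₁), c.drop (c.length - p₁),
      (List.take_append_drop _ c).symm, by simp; omega⟩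
  obtain ⟨e₁, e₀, rfl, he₁⟩ : ∃ e₁ e₀, e = e₁ ++ e₀ ∧ e₁.length = p₃ :=
    ⟨e.take p₃, e.drop p₃, (List.take_append_drop _ e).symm, by simp; omega⟩
  have hbm : (b.take (b.length - p₂ + 1)).length = b.length - p₂ + 1 := by simp; omega
  have hbne : b.take (b.length - p₂ + 1) ≠ [] := by
    intro h; rw [h] at hbm; simp at hbm
  obtain ⟨z, zs, hz⟩ := List.exists_cons_of_ne_nil hbne
  have hbsplit : b = (z :: zs) ++ b.drop (b.length - p₂ + 1) := by
    conv_lhs => rw [← List.take_append_drop (b.length - p₂ + 1) b]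
    rw [hz]
  set bt := b.drop (b.length - p₂ + 1) with hbt
  have hzs : (z :: zs).length = b.length - p₂ + 1 := by rw [← hz]; exact hbm
  have hbtlen : bt.length = p₂ - 1 := by simp [hbt]; omega
  have key := base c₁ (pProd z zs :: bt) e₁ f hc₁ (by simp; omega) he₁
  have key' : P c₁ * (q z * (P zs * (P bt * (q f * P e₁))))
      = P c₁ * (q f * (q z * (P zs * (P bt * P e₁)))) := by
    have e1 : P ((c₁ ++ (pProd z zs :: bt)) ++ f :: e₁)
        = P c₁ * (q z * (P zs * (P bt * (q f * P e₁)))) := by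
      simp [q_pProd, mul_assoc]
    have e2 : P (c₁ ++ f :: ((pProd z zs :: bt) ++ e₁))
        = P c₁ * (q f * (q z * (P zs * (P bt * P e₁)))) := by
      simp [q_pProd, mul_assoc]
    rw [← e1, ← e2]; exact key
  have hgoal1 : P (((c₀ ++ c₁) ++ b) ++ f :: (e₁ ++ e₀))
      = P c₀ * (P c₁ * (q z * (P zs * (P bt * (q f * (P e₁ * P e₀)))))) := by
    conv_lhs => rw [hbsplit]
    simp [mul_assoc]
  have hgoal2 : P ((c₀ ++ c₁) ++ f :: (b ++ (e₁ ++ e₀)))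
      = P c₀ * (P c₁ * (q f * (q z * (P zs * (P bt * (P e₁ * P e₀)))))) := by
    conv_lhs => rw [hbsplit]
    simp [mul_assoc]
  rw [hgoal1, hgoal2]
  have := congrArg (fun X => P c₀ * X * P e₀) key'
  simp only [mul_assoc] at this ⊢
  exact this

end Helpers

theorem permutative_medial_bound {S : Type*} [Semigroup S]
    (n : ℕ) (hn : 2 ≤ n) (σ : Equiv.Perm (Fin n)) (hσ : σ ≠ 1)
    (hperm : PermIdentity (S := S) n hn σ) :
    ∃ k : ℕ, 0 < k ∧
      ∀ u v : S,
        (∃ (a : S) (l : List S), l.length + 1 = k ∧ u = pProd a l) →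
        (∃ (a : S) (l : List S), l.length + 1 = k ∧ v = pProd a l) →
        ∀ x y : S, u * x * y * v = u * y * x * v := by
  classical
  obtain ⟨m, rfl⟩ : ∃ m, n = m + 2 := ⟨n - 2, by omega⟩
  have hx0 : (⟨0, by omega⟩ : Fin (m + 2)) = 0 := Fin.ext (by simp)
  -- the basic identity, in `WithOne S`
  have hB : ∀ x : Fin (m + 2) → S, P (List.ofFn x) = P (List.ofFn (x ∘ ⇑σ)) := by
    intro x
    have h := hperm x
    have e1 : q (pProd (x ⟨0, by omega⟩) (List.ofFn x).tail) = P (List.ofFn x) := by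
      rw [q_pProd, List.ofFn_succ, List.tail_cons, hx0]
    have e2 : q (pProd (x (σ ⟨0, by omega⟩)) (List.ofFn (x ∘ ⇑σ)).tail)
        = P (List.ofFn (x ∘ ⇑σ)) := by
      rw [q_pProd, List.ofFn_succ, List.tail_cons, hx0]
      rfl
    exact e1.symm.trans ((congrArg q h).trans e2)
  -- the extreme moved points of σ
  have hex : ∃ i : Fin (m + 2), σ i ≠ i := by
    by_contra h
    push_neg at h
    exact hσ (Equiv.ext h)
  have hTne : (Finset.univ.filter (fun i => σ i ≠ i) : Finset (Fin (m + 2))).Nonempty := by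
    obtain ⟨i, hi⟩ := hex
    exact ⟨i, by simp [hi]⟩
  obtain ⟨sF, hs, hsmax⟩ : ∃ sF : Fin (m + 2), σ sF ≠ sF ∧ ∀ i, σ i ≠ i → i ≤ sF := by
    refine ⟨(Finset.univ.filter (fun i => σ i ≠ i)).max' hTne, ?_, ?_⟩
    · have := (Finset.univ.filter (fun i => σ i ≠ i)).max'_mem hTne
      simpa using (Finset.mem_filter.mp this).2
    · exact fun i hi => Finset.le_max' _ i (by simp [hi])
  obtain ⟨rF, hr, hrmin⟩ : ∃ rF : Fin (m + 2), σ rF ≠ rF ∧ ∀ i, σ i ≠ i → rF ≤ i := by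
    refine ⟨(Finset.univ.filter (fun i => σ i ≠ i)).min' hTne, ?_, ?_⟩
    · have := (Finset.univ.filter (fun i => σ i ≠ i)).min'_mem hTne
      simpa using (Finset.mem_filter.mp this).2
    · exact fun i hi => Finset.min'_le _ i (by simp [hi])
  obtain ⟨wF, hws, hjl⟩ := jump_left σ hB sF hs hsmax
  obtain ⟨w'F, hrw, hjr⟩ := jump_right σ hB rF hr hrmin
  have hwsv : (wF : ℕ) < (sF : ℕ) := hws
  have hrwv : (rF : ℕ) < (w'F : ℕ) := hrw
  have hsn : (sF : ℕ) < m + 2 := sF.isLt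
  have hwn' : (w'F : ℕ) < m + 2 := w'F.isLt
  -- the lifted jump identities
  have JL := lift_jump ((wF : ℕ)) ((sF : ℕ) + 1 - (wF : ℕ)) (m + 2 - 1 - (sF : ℕ))
    (by omega) (jump_left_list sF wF hws hjl)
  have JR := lift_jump ((rF : ℕ)) ((w'F : ℕ) + 1 - (rF : ℕ)) (m + 2 - 1 - (w'F : ℕ))
    (by omega) (fun l₁ l₂ l₃ f h1 h2 h3 => (jump_right_list rF w'F hrw hjr l₁ l₂ l₃ f h1 h2 h3).symm)
  -- choice of k
  refine ⟨(m + 2) + max ((sF : ℕ) - (wF : ℕ)) ((w'F : ℕ) + 1 - (rF : ℕ)), by omega, ?_⟩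
  rintro u v ⟨ua, ul, hul, rfl⟩ ⟨va, vl, hvl, rfl⟩ x y
  have hU : (ua :: ul).length = (m + 2) + max ((sF : ℕ) - (wF : ℕ)) ((w'F : ℕ) + 1 - (rF : ℕ)) := by
    simp; omega
  have hV : (va :: vl).length = (m + 2) + max ((sF : ℕ) - (wF : ℕ)) ((w'F : ℕ) + 1 - (rF : ℕ)) := by
    simp; omega
  obtain ⟨U₁, U₂, hUsplit, hU₁, hU₂⟩ : ∃ U₁ U₂ : List S, ua :: ul = U₁ ++ U₂ ∧
      U₁.length = m + 2 ∧ U₂.length = max ((sF : ℕ) - (wF : ℕ)) ((w'F : ℕ) + 1 - (rF : ℕ)) :=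
    ⟨(ua :: ul).take (m + 2), (ua :: ul).drop (m + 2),
      (List.take_append_drop _ _).symm, by rw [List.length_take, hU]; omega,
      by rw [List.length_drop, hU]; omega⟩
  have step1 := JL U₁ (U₂ ++ [x]) (va :: vl) y
    (by omega) (by simp [hU₂]; omega) (by rw [hV]; omega)
  have step2 := JR U₁ U₂ (x :: va :: vl) y
    (by omega) (by omega) (by simp [hV]; omega)
  have hPmain : P ((ua :: ul) ++ x :: y :: (va :: vl)) = P ((ua :: ul) ++ y :: x :: (va :: vl)) := by
    calc P ((ua :: ul) ++ x :: y :: (va :: vl))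
        = P ((U₁ ++ (U₂ ++ [x])) ++ y :: (va :: vl)) := by
          rw [hUsplit]; congr 1; simp
      _ = P (U₁ ++ y :: ((U₂ ++ [x]) ++ (va :: vl))) := step1
      _ = P (U₁ ++ y :: (U₂ ++ (x :: va :: vl))) := by congr 1; simp
      _ = P ((U₁ ++ U₂) ++ y :: (x :: va :: vl)) := step2.symm
      _ = P ((ua :: ul) ++ y :: x :: (va :: vl)) := by rw [hUsplit]
  apply q_inj
  have hqu : q (pProd ua ul) = P (ua :: ul) := q_pProd ua ul
  have hqv : q (pProd va vl) = P (va :: vl) := q_pProd va vl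
  calc q (pProd ua ul * x * y * pProd va vl)
      = P ((ua :: ul) ++ x :: y :: (va :: vl)) := by
        rw [q_mul, q_mul, q_mul, hqu, hqv]
        simp only [P_append, P_cons, mul_assoc]
    _ = P ((ua :: ul) ++ y :: x :: (va :: vl)) := hPmain
    _ = q (pProd ua ul * y * x * pProd va vl) := by
        rw [q_mul, q_mul, q_mul, hqu, hqv]
        simp only [P_append, P_cons, mul_assoc]
end

section
/- Let S be a permutative semigroup and X a nonempty subset of S with Sep(X) nonempty. Then X is a medial subset of S, i.e., for all u,v,x,y ∈ S, uxyv ∈ X iff uyxv ∈ X. -/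
/-!
Fix `t ∈ Sep(X)`. Since `σ ≠ 1`, some adjacent letters `xᵢ, xᵢ₊₁` appear in reverse order on
the right-hand side of the permutation identity; substituting `x, y` for them and `t` for every
other letter gives `p₁ x y p₂ = p₃ y p₄ x p₅` with every `pₖ` a power of `t`, hence in the
subsemigroup `Sep(X)`. Multiplying by separator elements at either end does not change membership
in `X`, so this identity yields the rotation `u v ∈ X ↔ v p₄ u ∈ X` and, multiplied on the right
by `h`, the exchange `u v h ∈ X ↔ v p₄ u h ∈ X`. Exchanging twice (for `u, v` and then for
`v, p₄ u`) swaps any two adjacent factors in front of `h`, and rotating `u x y v` to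
`x y (v p₄ u)` reduces mediality to such a swap.
-/

theorem Equiv.Perm.exists_succ_lt_castSucc {m : ℕ} {σ : Equiv.Perm (Fin (m + 1))}
    (hσ : σ ≠ 1) :
    ∃ i : Fin m, σ i.succ < σ i.castSucc := by
  by_contra! h
  have hmono : StrictMono σ :=
    (Fin.monotone_iff_le_succ.2 h).strictMono_of_injective σ.injective
  exact hσ (Equiv.ext fun x => hmono.apply_eq)

theorem WithOne.coe_pProd {S : Type*} [Semigroup S] (a : S) (l : List S) :
    ((pProd a l : S) : WithOne S) = a * (l.map (↑)).prod := by
  induction l generalizing a with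
  | nil => simp [pProd]
  | cons b l ih =>
    simp only [pProd, List.foldl_cons, List.map_cons, List.prod_cons] at ih ⊢
    rw [ih, WithOne.coe_mul, mul_assoc]

theorem WithOne.coe_pProd_ofFn {S : Type*} [Semigroup S] {n : ℕ} (x : Fin n → S) (h : 0 < n) :
    ((pProd (x ⟨0, h⟩) (List.ofFn x).tail : S) : WithOne S) =
      (List.ofFn fun i => (x i : WithOne S)).prod := by
  cases n with
  | zero => omega
  | succ n => simp [List.ofFn_succ, WithOne.coe_pProd, Function.comp_def]

theorem PermIdentity.prod_ofFn_eq {S : Type*} [Semigroup S] {n : ℕ} {hn : 2 ≤ n}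
    {σ : Equiv.Perm (Fin n)} (h : PermIdentity (S := S) n hn σ) (x : Fin n → S) :
    (List.ofFn fun i => (x i : WithOne S)).prod =
      (List.ofFn fun i => (x (σ i) : WithOne S)).prod :=
  (WithOne.coe_pProd_ofFn x _).symm.trans
    ((congrArg _ (h x)).trans (WithOne.coe_pProd_ofFn (x ∘ σ) _))

theorem List.prod_ofFn_eq_of_eq_off_pair {M : Type*} [Monoid M] {n : ℕ} (g : Fin n → M)
    (t : M) {p p' : Fin n} (hpp' : p < p') (hg : ∀ j, j ≠ p → j ≠ p' → g j = t) :
    (List.ofFn g).prod =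
      t ^ (p : ℕ) * g p * t ^ (p' - p - 1 : ℕ) * g p' * t ^ (n - 1 - p' : ℕ) := by
  have hlist : List.ofFn g = List.replicate p t ++ g p :: List.replicate (p' - p - 1) t ++
      g p' :: List.replicate (n - 1 - p') t := by
    apply List.ext_getElem
    · simp only [List.length_ofFn, List.length_append, List.length_replicate, List.length_cons]
      omega
    intro k hk _
    simp only [List.getElem_ofFn, List.getElem_append, List.getElem_cons, List.getElem_replicate,
      List.length_append, List.length_replicate, List.length_cons]
    have hp := Fin.lt_def.1 hpp'
    split_ifs <;> first
      | exact congrArg g (Fin.ext (by simp only; omega))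
      | exact hg _ (fun h => by rw [Fin.ext_iff] at h; simp only at h; omega)
          (fun h => by rw [Fin.ext_iff] at h; simp only at h; omega)
  simp [hlist, List.prod_append, mul_assoc]

theorem PermIdentity.exists_pow_identity {S : Type*} [Semigroup S] {n : ℕ} {hn : 2 ≤ n}
    {σ : Equiv.Perm (Fin n)} (hperm : PermIdentity (S := S) n hn σ) (hσ : σ ≠ 1) (t : S) :
    ∃ a b c q e : ℕ, ∀ x y : S, (t : WithOne S) ^ a * x * y * (t : WithOne S) ^ b =
      (t : WithOne S) ^ c * y * (t : WithOne S) ^ q * x * (t : WithOne S) ^ e := by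
  obtain ⟨m, rfl⟩ : ∃ m, n = m + 1 := ⟨n - 1, by omega⟩
  obtain ⟨i, hi⟩ := Equiv.Perm.exists_succ_lt_castSucc (inv_ne_one.2 hσ)
  refine ⟨i, m - (i + 1), σ⁻¹ i.succ, σ⁻¹ i.castSucc - σ⁻¹ i.succ - 1,
    m - σ⁻¹ i.castSucc, fun x y => ?_⟩
  let f : Fin (m + 1) → S := fun j => if j = i.castSucc then x else if j = i.succ then y else t
  have key := hperm.prod_ofFn_eq f
  have hne : i.succ ≠ i.castSucc := Fin.castSucc_lt_succ.ne'
  rw [List.prod_ofFn_eq_of_eq_off_pair _ (t : WithOne S) (Fin.castSucc_lt_succ (i := i))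
      (fun j h₁ h₂ => by simp [f, h₁, h₂]),
    List.prod_ofFn_eq_of_eq_off_pair _ (t : WithOne S) hi
      (fun j h₁ h₂ => by
        rw [Ne, Equiv.Perm.eq_inv_iff_eq] at h₁ h₂
        simp [f, h₁, h₂])] at key
  simpa [f, hne] using key

theorem Subsemigroup.exists_coe_eq_pow_succ {S : Type*} [Semigroup S] {T : Subsemigroup S}
    {t : S} (ht : t ∈ T) (k : ℕ) : ∃ p ∈ T, (p : WithOne S) = (t : WithOne S) ^ (k + 1) := by
  induction k with
  | zero => exact ⟨t, ht, (pow_one _).symm⟩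
  | succ k ih =>
    obtain ⟨p, hp, hpk⟩ := ih
    exact ⟨p * t, T.mul_mem hp ht, by rw [WithOne.coe_mul, hpk, ← pow_succ]⟩

theorem PermIdentity.exists_mem_identity {S : Type*} [Semigroup S] {n : ℕ} {hn : 2 ≤ n}
    {σ : Equiv.Perm (Fin n)} (hperm : PermIdentity (S := S) n hn σ) (hσ : σ ≠ 1)
    {T : Subsemigroup S} {t : S} (ht : t ∈ T) :
    ∃ p₁ ∈ T, ∃ p₂ ∈ T, ∃ p₃ ∈ T, ∃ p₄ ∈ T, ∃ p₅ ∈ T,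
      ∀ x y : S, p₁ * x * y * p₂ = p₃ * y * p₄ * x * p₅ := by
  obtain ⟨a, b, c, q, e, hpow⟩ := hperm.exists_pow_identity hσ t
  obtain ⟨p₁, h₁, hp₁⟩ := Subsemigroup.exists_coe_eq_pow_succ ht (a + 1)
  obtain ⟨p₂, h₂, hp₂⟩ := Subsemigroup.exists_coe_eq_pow_succ ht b
  obtain ⟨p₃, h₃, hp₃⟩ := Subsemigroup.exists_coe_eq_pow_succ ht c
  obtain ⟨p₄, h₄, hp₄⟩ := Subsemigroup.exists_coe_eq_pow_succ ht q
  obtain ⟨p₅, h₅, hp₅⟩ := Subsemigroup.exists_coe_eq_pow_succ ht e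
  refine ⟨p₁, h₁, p₂, h₂, p₃, h₃, p₄, h₄, p₅, h₅, fun x y => WithOne.coe_injective ?_⟩
  -- Multiplying by `t` at both ends and replacing `x` by `t * x` makes every power of `t`
  -- positive, so that it comes from an element of `T`.
  have key := congrArg (fun w => (t : WithOne S) * w * t) (hpow (t * x) y)
  rw [pow_succ, pow_succ'] at hp₁
  rw [pow_succ'] at hp₃
  rw [pow_succ] at hp₂ hp₄ hp₅
  simp only [WithOne.coe_mul, hp₁, hp₂, hp₃, hp₄, hp₅, mul_assoc] at key ⊢
  exact key

namespace Separator

variable {S : Type*} [Semigroup S] {A : Set S} {s t : S}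

theorem mul_mem (hs : s ∈ Separator A) (ht : t ∈ Separator A) : s * t ∈ Separator A := by
  obtain ⟨hs₁, hs₂, hs₃, hs₄⟩ := hs
  obtain ⟨ht₁, ht₂, ht₃, ht₄⟩ := ht
  refine ⟨fun a ha => ?_, fun a ha => ?_, fun a ha => ?_, fun a ha => ?_⟩
  · rw [mul_assoc]; exact hs₁ _ (ht₁ a ha)
  · rw [← mul_assoc]; exact ht₂ _ (hs₂ a ha)
  · rw [mul_assoc]; exact hs₃ _ (ht₃ a ha)
  · rw [← mul_assoc]; exact ht₄ _ (hs₄ a ha)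

def subsemigroup (A : Set S) : Subsemigroup S where
  carrier := Separator A
  mul_mem' := mul_mem

theorem mul_left_mem_iff (ht : t ∈ Separator A) (w : S) : t * w ∈ A ↔ w ∈ A :=
  ⟨fun h => by_contra fun hw => ht.2.2.1 w hw h, ht.1 w⟩

theorem mul_right_mem_iff (ht : t ∈ Separator A) (w : S) : w * t ∈ A ↔ w ∈ A :=
  ⟨fun h => by_contra fun hw => ht.2.2.2 w hw h, ht.2.1 w⟩

end Separator

section Medial

variable {S : Type*} [Semigroup S] {A : Set S} {p₁ p₂ p₃ p₄ p₅ : S}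

theorem mul_mem_iff_rotate (hid : ∀ x y : S, p₁ * x * y * p₂ = p₃ * y * p₄ * x * p₅)
    (h₁ : p₁ ∈ Separator A) (h₂ : p₂ ∈ Separator A) (h₃ : p₃ ∈ Separator A)
    (h₅ : p₅ ∈ Separator A) (u v : S) : u * v ∈ A ↔ v * p₄ * u ∈ A := by
  calc u * v ∈ A ↔ p₁ * u * v * p₂ ∈ A := by
        rw [Separator.mul_right_mem_iff h₂, mul_assoc, Separator.mul_left_mem_iff h₁]
    _ ↔ p₃ * (v * p₄ * u) * p₅ ∈ A := by rw [hid]; simp only [mul_assoc]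
    _ ↔ v * p₄ * u ∈ A := by
        rw [Separator.mul_right_mem_iff h₅, Separator.mul_left_mem_iff h₃]

theorem mul_mul_mem_iff_mul_mem_of_rotate {p q : S} (hrot : ∀ u v : S, u * v ∈ A ↔ v * p * u ∈ A)
    (hq : q ∈ Separator A) (w h : S) : w * q * h ∈ A ↔ w * h ∈ A := by
  rw [hrot, ← mul_assoc, Separator.mul_right_mem_iff hq, ← hrot]

theorem mul_mul_mem_iff_swap (hid : ∀ x y : S, p₁ * x * y * p₂ = p₃ * y * p₄ * x * p₅)
    (h₁ : p₁ ∈ Separator A) (h₂ : p₂ ∈ Separator A) (h₃ : p₃ ∈ Separator A)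
    (h₅ : p₅ ∈ Separator A) (u v h : S) : u * v * h ∈ A ↔ v * p₄ * u * h ∈ A := by
  have hrot := mul_mem_iff_rotate hid h₁ h₂ h₃ h₅
  calc u * v * h ∈ A ↔ p₁ * (u * v * p₂ * h) ∈ A := by
        rw [Separator.mul_left_mem_iff h₁, mul_mul_mem_iff_mul_mem_of_rotate hrot h₂]
    _ ↔ p₃ * (v * p₄ * u * p₅ * h) ∈ A := by
        simp only [← mul_assoc, hid]
    _ ↔ v * p₄ * u * h ∈ A := by
        rw [Separator.mul_left_mem_iff h₃, mul_mul_mem_iff_mul_mem_of_rotate hrot h₅]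

theorem mul_mul_mem_iff_of_swap {p : S} (hp : p ∈ Separator A)
    (hswap : ∀ u v h : S, u * v * h ∈ A ↔ v * p * u * h ∈ A) (x y h : S) :
    x * y * h ∈ A ↔ y * x * h ∈ A := by
  calc x * y * h ∈ A ↔ y * (p * x) * h ∈ A := by rw [hswap, mul_assoc y]
    _ ↔ p * (x * p * y * h) ∈ A := by rw [hswap]; simp only [mul_assoc]
    _ ↔ y * x * h ∈ A := by rw [Separator.mul_left_mem_iff hp, ← hswap]

theorem medial_of_rotate_of_swap {p : S} (hp : p ∈ Separator A)
    (hrot : ∀ u v : S, u * v ∈ A ↔ v * p * u ∈ A)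
    (hswap : ∀ u v h : S, u * v * h ∈ A ↔ v * p * u * h ∈ A) (u x y v : S) :
    u * x * y * v ∈ A ↔ u * y * x * v ∈ A := by
  calc u * x * y * v ∈ A ↔ x * y * (v * p * u) ∈ A := by
        rw [mul_assoc u, mul_assoc u, hrot]; simp only [mul_assoc]
    _ ↔ y * x * (v * p * u) ∈ A := mul_mul_mem_iff_of_swap hp hswap x y _
    _ ↔ u * y * x * v ∈ A := by
        rw [mul_assoc u, mul_assoc u, hrot u]; simp only [mul_assoc]

end Medial

theorem permutative_subset_medial_general {S : Type*} [Semigroup S]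
    (n : ℕ) (hn : 2 ≤ n) (σ : Equiv.Perm (Fin n)) (hσ : σ ≠ 1)
    (hperm : PermIdentity (S := S) n hn σ)
    (X : Set S) (hsep : (Separator X).Nonempty) :
    ∀ u x y v : S, u * x * y * v ∈ X ↔ u * y * x * v ∈ X := by
  obtain ⟨t, ht⟩ := hsep
  obtain ⟨p₁, h₁, p₂, h₂, p₃, h₃, p₄, h₄, p₅, h₅, hid⟩ :=
    hperm.exists_mem_identity hσ (T := Separator.subsemigroup X) ht
  exact medial_of_rotate_of_swap h₄ (mul_mem_iff_rotate hid h₁ h₂ h₃ h₅)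
    (mul_mul_mem_iff_swap hid h₁ h₂ h₃ h₅)

theorem permutative_subset_medial {S : Type*} [Semigroup S]
    (n : ℕ) (hn : 2 ≤ n) (σ : Equiv.Perm (Fin n)) (hσ : σ ≠ 1)
    (hperm : PermIdentity (S := S) n hn σ)
    (X : Set S) (hX : X.Nonempty) (hsep : (Separator X).Nonempty) :
    ∀ u x y v : S, u * x * y * v ∈ X ↔ u * y * x * v ∈ X :=
  permutative_subset_medial_general n hn σ hσ hperm X hsep
end

section
/- Let A be a medial subset of a semigroup S with Sep(A) nonempty. If a, b ∈ Sep(A) and x, y ∈ S satisfy xay ∈ A, then xby ∈ A. -/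
theorem sep_elements_interchangeable {S : Type*} [Semigroup S]
    (A : Set S) (hmed : Medial A) (hne : (Separator A).Nonempty)
    (a b : S) (ha : a ∈ Separator A) (hb : b ∈ Separator A)
    (x y : S) (hxy : x * a * y ∈ A) : x * b * y ∈ A := by
  obtain ⟨s, hs1, hs2, hs3, hs4⟩ := hne
  obtain ⟨ha1, ha2, ha3, ha4⟩ := ha
  obtain ⟨hb1, hb2, hb3, hb4⟩ := hb
  have h1 : x * a * y * s ∈ A := hs2 _ hxy
  have h2 : x * y * a * s ∈ A := (hmed a y x s).1 h1
  have h3 : x * y * a ∈ A := by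
    by_contra h; exact hs4 _ h h2
  have h4 : x * y ∈ A := by
    by_contra h; exact ha4 _ h h3
  have h5 : x * y * b ∈ A := hb2 _ h4
  have h6 : x * y * b * s ∈ A := hs2 _ h5
  have h7 : x * b * y * s ∈ A := (hmed y b x s).1 h6
  by_contra h; exact hs4 _ h h7
end
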